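/- Let K = ℚ(√D) with D ≥ 2 squarefree, i ≥ -1 odd, 0 ≤ r ≤ u_{i+2}-1, and β_j = α_{i,r}. Then the total number of partitions of 2β_j into totally positive elements of O_K equals min{r+2, u_{i+2}-r+2}, and the total number of partitions of β_j + β_{j+1} equals min{r+2, u_{i+2}-r+1}. -/
import Mathlib


noncomputable section

/-- `ω_D`: the standard generator of the ring of integers of `ℚ(√D)`. -/
def omegaD (D : ℕ) : ℝ := if D % 4 = 1 then (1 + Real.sqrt D) / 2 else Real.sqrt D

/-- The Galois conjugate of `ω_D`. -/
def omegaD' (D : ℕ) : ℝ := if D % 4 = 1 then (1 - Real.sqrt D) / 2 else -Real.sqrt D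

/-- Elements of `O_K` in coordinates: `(x, y)` represents `x + y·ω_D`. -/
abbrev OK : Type := ℤ × ℤ

/-- First real embedding. -/
def emb1 (D : ℕ) (a : OK) : ℝ := a.1 + a.2 * omegaD D

/-- Second real embedding (Galois conjugate). -/
def emb2 (D : ℕ) (a : OK) : ℝ := a.1 + a.2 * omegaD' D

/-- Galois conjugation on `O_K`. -/
def conjOK (D : ℕ) (a : OK) : OK := (a.1 + (if D % 4 = 1 then (1 : ℤ) else 0) * a.2, -a.2)

/-- Total positivity. -/
def TotPos (D : ℕ) (a : OK) : Prop := 0 < emb1 D a ∧ 0 < emb2 D a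

/-- The field norm. -/
def Nm (D : ℕ) (a : OK) : ℝ := emb1 D a * emb2 D a

/-- Indecomposability: totally positive and not a sum of two totally positive elements. -/
def Indec (D : ℕ) (a : OK) : Prop :=
  TotPos D a ∧ ¬ ∃ b c : OK, TotPos D b ∧ TotPos D c ∧ a = b + c

/-- Number of partitions of `α` into indecomposable parts (`p_K(α|I)`). -/
def pKI (D : ℕ) (α : OK) : ℕ :=
  Set.ncard {s : Multiset OK | (∀ x ∈ s, Indec D x) ∧ s.sum = α}

/-- Number of partitions of `α` into totally positive parts (`p_K(α)`). -/
def pK (D : ℕ) (α : OK) : ℕ :=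
  Set.ncard {s : Multiset OK | (∀ x ∈ s, TotPos D x) ∧ s.sum = α}

/-- Discriminant of `ℚ(√D)`. -/
def disc (D : ℕ) : ℕ := if D % 4 = 1 then D else 4 * D

/-- The ordered two-sided sequence of indecomposables together with
the coefficients `v j ≥ 2` from the Hejda–Kala relation `v_j β_j = β_{j-1} + β_{j+1}`. -/
structure BetaSeq (D : ℕ) (β : ℤ → OK) (v : ℤ → ℤ) : Prop where
  indec : ∀ j, Indec D (β j)
  surj : ∀ a : OK, Indec D a → ∃ j, β j = a
  mono : StrictMono fun j => emb1 D (β j)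
  zero : β 0 = (1, 0)
  conj_eq : ∀ j, β (-j) = conjOK D (β j)
  v_two_le : ∀ j, 2 ≤ v j
  v_symm : ∀ j, v (-j) = v j
  rel : ∀ j, v j • β j = β (j - 1) + β (j + 1)

/-- The continued fraction data of `ω_D = [⌈u₀/2⌉, \overline{u₁, …, u_s}]` (with `u_s = u_0`),
with tails `γ_0 = ω_D`, `γ_i = [u_i, u_{i+1}, …]` for `i ≥ 1`. -/
structure CFData (D : ℕ) (u : ℕ → ℕ) (γ : ℕ → ℝ) : Prop where
  gamma_zero : γ 0 = omegaD D
  u_zero : (u 0 : ℤ) = 2 * ⌊omegaD D⌋ - (if D % 4 = 1 then 1 else 0)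
  head : omegaD D = (⌊omegaD D⌋ : ℝ) + 1 / γ 1
  step : ∀ i, 1 ≤ i → γ i = u i + 1 / γ (i + 1)
  one_lt : ∀ i, 1 ≤ i → 1 < γ i
  floor_eq : ∀ i, 1 ≤ i → (u i : ℤ) = ⌊γ i⌋
  period : ∃ s, 1 ≤ s ∧ u s = u 0 ∧ ∀ i, 1 ≤ i → u (i + s) = u i

/-- The convergents `α_i = p_i + q_i ξ_D`, indexed by `i ≥ -1`. -/
structure ConvData (D : ℕ) (u : ℕ → ℕ) (a : ℤ → OK) : Prop where
  neg_one : a (-1) = (1, 0)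
  zero : a 0 = (⌊omegaD D⌋, 0) + (if D % 4 = 1 then ((-1 : ℤ), (1 : ℤ)) else (0, 1))
  recur : ∀ i : ℤ, -1 ≤ i → a (i + 2) = (u (i + 2).toNat : ℤ) • a (i + 1) + a i

/-- Semiconvergents `α_{i,r} = α_i + r·α_{i+1}`. -/
def semiconv (a : ℤ → OK) (i r : ℤ) : OK := a i + r • a (i + 1)



lemma emb1_add (D : ℕ) (x y : OK) : emb1 D (x + y) = emb1 D x + emb1 D y := by
  simp only [emb1, Prod.fst_add, Prod.snd_add]
  push_cast; ring

lemma emb1_zsmul (D : ℕ) (n : ℤ) (x : OK) : emb1 D (n • x) = n * emb1 D x := by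
  simp only [emb1, Prod.smul_fst, Prod.smul_snd, smul_eq_mul]
  push_cast; ring

lemma emb2_add (D : ℕ) (x y : OK) : emb2 D (x + y) = emb2 D x + emb2 D y := by
  simp only [emb2, Prod.fst_add, Prod.snd_add]
  push_cast; ring

lemma emb2_zsmul (D : ℕ) (n : ℤ) (x : OK) : emb2 D (n • x) = n * emb2 D x := by
  simp only [emb2, Prod.smul_fst, Prod.smul_snd, smul_eq_mul]
  push_cast; ring

lemma totPos_add (D : ℕ) {x y : OK} (hx : TotPos D x) (hy : TotPos D y) :
    TotPos D (x + y) := by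
  refine ⟨?_, ?_⟩
  · rw [emb1_add]; exact add_pos hx.1 hy.1
  · rw [emb2_add]; exact add_pos hx.2 hy.2

lemma emb1_conjOK (D : ℕ) (x : OK) : emb1 D (conjOK D x) = emb2 D x := by
  simp only [emb1, emb2, conjOK, omegaD, omegaD']
  split_ifs <;> push_cast <;> ring

lemma one_lt_omegaD (D : ℕ) (hD : 2 ≤ D) : 1 < omegaD D := by
  unfold omegaD
  split_ifs with h
  · have h5 : 5 ≤ D := by omega
    have : (2:ℝ) < Real.sqrt D := by
      rw [Real.lt_sqrt (by norm_num)]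
      have : (5:ℝ) ≤ D := by exact_mod_cast h5
      nlinarith
    linarith
  · rw [Real.lt_sqrt (by norm_num)]
    have : (2:ℝ) ≤ D := by exact_mod_cast hD
    nlinarith

lemma omegaD'_eq (D : ℕ) : omegaD' D = (if D % 4 = 1 then (1:ℝ) else 0) - omegaD D := by
  unfold omegaD omegaD'
  split_ifs <;> ring

/-- `m`-coordinate in the basis `(p, q)` (times det, corrected by det² = 1). -/
def mco (p q x : OK) : ℤ := (p.1 * q.2 - p.2 * q.1) * (x.1 * q.2 - x.2 * q.1)
/-- `n`-coordinate in the basis `(p, q)`. -/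
def nco (p q x : OK) : ℤ := (p.1 * q.2 - p.2 * q.1) * (p.1 * x.2 - p.2 * x.1)

lemma mco_add (p q x y : OK) : mco p q (x + y) = mco p q x + mco p q y := by
  simp only [mco, Prod.fst_add, Prod.snd_add]; ring

lemma nco_add (p q x y : OK) : nco p q (x + y) = nco p q x + nco p q y := by
  simp only [nco, Prod.fst_add, Prod.snd_add]; ring

lemma mco_zsmul (p q : OK) (n : ℤ) (x : OK) : mco p q (n • x) = n * mco p q x := by
  simp only [mco, Prod.smul_fst, Prod.smul_snd, smul_eq_mul]; ring

lemma nco_zsmul (p q : OK) (n : ℤ) (x : OK) : nco p q (n • x) = n * nco p q x := by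
  simp only [nco, Prod.smul_fst, Prod.smul_snd, smul_eq_mul]; ring

lemma mco_sum (p q : OK) (s : Multiset OK) :
    mco p q s.sum = (s.map (mco p q)).sum := by
  induction s using Multiset.induction_on with
  | empty => simp [mco]
  | cons a s ih => simp [Multiset.sum_cons, mco_add, ih]

lemma nco_sum (p q : OK) (s : Multiset OK) :
    nco p q s.sum = (s.map (nco p q)).sum := by
  induction s using Multiset.induction_on with
  | empty => simp [nco]
  | cons a s ih => simp [Multiset.sum_cons, nco_add, ih]

lemma repr_co (p q : OK)
    (hd : (p.1 * q.2 - p.2 * q.1) * (p.1 * q.2 - p.2 * q.1) = 1) (x : OK) :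
    x = mco p q x • p + nco p q x • q := by
  have h1 : x.1 = mco p q x * p.1 + nco p q x * q.1 := by
    simp only [mco, nco]; linear_combination (-x.1) * hd
  have h2 : x.2 = mco p q x * p.2 + nco p q x * q.2 := by
    simp only [mco, nco]; linear_combination (-x.2) * hd
  ext
  · simpa using h1
  · simpa using h2

lemma mco_p (p q : OK)
    (hd : (p.1 * q.2 - p.2 * q.1) * (p.1 * q.2 - p.2 * q.1) = 1) : mco p q p = 1 := hd

lemma mco_q (p q : OK) : mco p q q = 0 := by simp only [mco]; ring

lemma nco_p (p q : OK) : nco p q p = 0 := by simp only [nco]; ring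

lemma nco_q (p q : OK)
    (hd : (p.1 * q.2 - p.2 * q.1) * (p.1 * q.2 - p.2 * q.1) = 1) : nco p q q = 1 := hd

lemma mco_comb (p q : OK)
    (hd : (p.1 * q.2 - p.2 * q.1) * (p.1 * q.2 - p.2 * q.1) = 1) (t : ℤ) :
    mco p q (p + t • q) = 1 := by
  rw [mco_add, mco_zsmul, mco_p p q hd, mco_q]; ring

lemma nco_comb (p q : OK)
    (hd : (p.1 * q.2 - p.2 * q.1) * (p.1 * q.2 - p.2 * q.1) = 1) (t : ℤ) :
    nco p q (p + t • q) = t := by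
  rw [nco_add, nco_zsmul, nco_p, nco_q p q hd]; ring

lemma emb1_repr (D : ℕ) (p q : OK)
    (hd : (p.1 * q.2 - p.2 * q.1) * (p.1 * q.2 - p.2 * q.1) = 1) (x : OK) :
    emb1 D x = mco p q x * emb1 D p + nco p q x * emb1 D q := by
  conv_lhs => rw [repr_co p q hd x]
  rw [emb1_add, emb1_zsmul, emb1_zsmul]

lemma emb2_repr (D : ℕ) (p q : OK)
    (hd : (p.1 * q.2 - p.2 * q.1) * (p.1 * q.2 - p.2 * q.1) = 1) (x : OK) :
    emb2 D x = mco p q x * emb2 D p + nco p q x * emb2 D q := by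
  conv_lhs => rw [repr_co p q hd x]
  rw [emb2_add, emb2_zsmul, emb2_zsmul]

/-- Any totally positive element has first coordinate `≥ 1` in the basis `(p,q)`. -/
lemma one_le_mco (D : ℕ) (p q : OK)
    (hd : (p.1 * q.2 - p.2 * q.1) * (p.1 * q.2 - p.2 * q.1) = 1)
    (hgp : 0 < emb1 D p) (hgq : 0 < emb1 D q)
    (hfp : 0 < emb2 D p) (hfq : emb2 D q < 0)
    {x : OK} (hx : TotPos D x) : 1 ≤ mco p q x := by
  by_contra hm
  push_neg at hm
  have hm' : mco p q x ≤ 0 := by omega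
  have hmR : (mco p q x : ℝ) ≤ 0 := by exact_mod_cast hm'
  have e2 := hx.2
  rw [emb2_repr D p q hd x] at e2
  have hn : nco p q x ≤ -1 := by
    by_contra hn
    push_neg at hn
    have hn' : 0 ≤ nco p q x := by omega
    have hnR : (0:ℝ) ≤ (nco p q x : ℝ) := by exact_mod_cast hn'
    nlinarith
  have hnR : (nco p q x : ℝ) ≤ -1 := by exact_mod_cast hn
  have e1 := hx.1
  rw [emb1_repr D p q hd x] at e1
  nlinarith

lemma totPos_comb (D : ℕ) (p q : OK) (U : ℤ)
    (hgp : 0 < emb1 D p) (hgq : 0 < emb1 D q)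
    (hfq : emb2 D q < 0)
    (hfU : 0 < emb2 D p + U * emb2 D q)
    (t : ℤ) (h0 : 0 ≤ t) (hU : t ≤ U) : TotPos D (p + t • q) := by
  have h0R : (0:ℝ) ≤ (t:ℝ) := by exact_mod_cast h0
  have hUR : (t:ℝ) ≤ (U:ℝ) := by exact_mod_cast hU
  constructor
  · rw [emb1_add, emb1_zsmul]; nlinarith
  · rw [emb2_add, emb2_zsmul]; nlinarith

lemma nco_bounds (D : ℕ) (p q : OK)
    (hd : (p.1 * q.2 - p.2 * q.1) * (p.1 * q.2 - p.2 * q.1) = 1)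
    (U : ℤ)
    (hgp : 0 < emb1 D p) (hgpq : emb1 D p < emb1 D q)
    (hfq : emb2 D q < 0)
    (hfU1 : emb2 D p + (U + 1) * emb2 D q < 0)
    {x : OK} (hx : TotPos D x) (h1 : mco p q x = 1) :
    0 ≤ nco p q x ∧ nco p q x ≤ U := by
  have e1 := hx.1
  have e2 := hx.2
  rw [emb1_repr D p q hd x, h1] at e1
  rw [emb2_repr D p q hd x, h1] at e2
  push_cast at e1 e2
  constructor
  · by_contra hn
    push_neg at hn
    have hnR : (nco p q x : ℝ) ≤ -1 := by exact_mod_cast (by omega : nco p q x ≤ -1)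
    nlinarith
  · by_contra hn
    push_neg at hn
    have hnR : ((U:ℝ) + 1) ≤ (nco p q x : ℝ) := by exact_mod_cast (by omega : U + 1 ≤ nco p q x)
    nlinarith

lemma comb_inj (D : ℕ) (p q : OK) (hgq : 0 < emb1 D q)
    {t t' : ℤ} (h : p + t • q = p + t' • q) : t = t' := by
  have hq : q ≠ 0 := by
    rintro rfl
    simp [emb1] at hgq
  have h2 : t • q = t' • q := by
    have := h
    abel_nf at this
    exact add_left_cancel h
  have h3 : (t - t') • q = 0 := by rw [sub_smul, h2]; abel
  have h4 : (t - t') * q.1 = 0 ∧ (t - t') * q.2 = 0 := by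
    constructor
    · have := congrArg Prod.fst h3
      simpa [smul_eq_mul] using this
    · have := congrArg Prod.snd h3
      simpa [smul_eq_mul] using this
  have hq1 : q.1 ≠ 0 ∨ q.2 ≠ 0 := by
    by_contra hc
    push_neg at hc
    exact hq (Prod.ext hc.1 hc.2)
  rcases hq1 with h5 | h5
  · have := mul_eq_zero.mp h4.1
    omega
  · have := mul_eq_zero.mp h4.2
    omega

lemma chain (D : ℕ) (hD : 2 ≤ D) (u : ℕ → ℕ) (γ : ℕ → ℝ) (hCF : CFData D u γ)
    (a : ℤ → OK) (hconv : ConvData D u a) :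
    ∀ m : ℕ,
      (0 < emb1 D (a ((m:ℤ) - 1))) ∧
      emb1 D (a ((m:ℤ) - 1)) < emb1 D (a (m:ℤ)) ∧
      (0 < (-1:ℝ)^m * emb2 D (a ((m:ℤ) - 1))) ∧
      (0 < (-1:ℝ)^(m+1) * emb2 D (a (m:ℤ))) ∧
      ((-1:ℝ)^m * emb2 D (a ((m:ℤ) - 1)) = γ (m+1) * ((-1:ℝ)^(m+1) * emb2 D (a (m:ℤ)))) ∧
      ((a ((m:ℤ)-1)).1 * (a (m:ℤ)).2 - (a ((m:ℤ)-1)).2 * (a (m:ℤ)).1) *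
        ((a ((m:ℤ)-1)).1 * (a (m:ℤ)).2 - (a ((m:ℤ)-1)).2 * (a (m:ℤ)).1) = 1 := by
  have hω := one_lt_omegaD D hD
  have hfl : 1 ≤ ⌊omegaD D⌋ := by
    rw [Int.le_floor]; exact_mod_cast hω.le
  have hflR : (1:ℝ) ≤ (⌊omegaD D⌋ : ℝ) := by exact_mod_cast hfl
  have hγ1 : 1 < γ 1 := hCF.one_lt 1 le_rfl
  have hfrac : omegaD D - (⌊omegaD D⌋ : ℝ) = 1 / γ 1 := by
    have := hCF.head; linarith
  intro m
  induction m with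
  | zero =>
    have e1 : ((0:ℕ):ℤ) - 1 = (-1 : ℤ) := by norm_num
    have e2 : ((0:ℕ):ℤ) = (0:ℤ) := by norm_num
    rw [e1, e2, hconv.neg_one, hconv.zero]
    by_cases hc : D % 4 = 1 <;>
      simp only [hc, if_true, if_false, reduceIte] <;>
      constructor
    · show (0:ℝ) < emb1 D (1, 0)
      simp [emb1]
    · refine ⟨?_, ?_, ?_, ?_, ?_⟩
      · show emb1 D (1,0) < emb1 D ((⌊omegaD D⌋, 0) + (-1, 1))
        simp only [emb1, Prod.fst_add, Prod.snd_add]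
        push_cast
        linarith
      · show (0:ℝ) < (-1:ℝ)^0 * emb2 D (1,0)
        simp [emb2]
      · show (0:ℝ) < (-1:ℝ)^1 * emb2 D ((⌊omegaD D⌋, 0) + (-1, 1))
        simp only [emb2, Prod.fst_add, Prod.snd_add, omegaD'_eq, hc, if_true, reduceIte]
        push_cast
        have : 0 < 1 / γ 1 := by positivity
        nlinarith [hfrac]
      · show (-1:ℝ)^0 * emb2 D (1,0) = γ 1 * ((-1:ℝ)^1 * emb2 D ((⌊omegaD D⌋, 0) + (-1, 1)))
        simp only [emb2, Prod.fst_add, Prod.snd_add, omegaD'_eq, hc, if_true, reduceIte]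
        push_cast
        have hγ0 : γ 1 ≠ 0 := by linarith
        have key : γ 1 * (omegaD D - (⌊omegaD D⌋:ℝ)) = 1 := by
          rw [hfrac]; field_simp
        linear_combination -key
      · show ((1:ℤ) * ((⌊omegaD D⌋, 0) + ((-1:ℤ), (1:ℤ))).2 - 0 * _) * _ = 1
        simp
    · show (0:ℝ) < emb1 D (1, 0)
      simp [emb1]
    · refine ⟨?_, ?_, ?_, ?_, ?_⟩
      · show emb1 D (1,0) < emb1 D ((⌊omegaD D⌋, 0) + (0, 1))
        simp only [emb1, Prod.fst_add, Prod.snd_add]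
        push_cast
        linarith
      · show (0:ℝ) < (-1:ℝ)^0 * emb2 D (1,0)
        simp [emb2]
      · show (0:ℝ) < (-1:ℝ)^1 * emb2 D ((⌊omegaD D⌋, 0) + (0, 1))
        simp only [emb2, Prod.fst_add, Prod.snd_add, omegaD'_eq, hc, if_false, reduceIte]
        push_cast
        have : 0 < 1 / γ 1 := by positivity
        nlinarith [hfrac]
      · show (-1:ℝ)^0 * emb2 D (1,0) = γ 1 * ((-1:ℝ)^1 * emb2 D ((⌊omegaD D⌋, 0) + (0, 1)))
        simp only [emb2, Prod.fst_add, Prod.snd_add, omegaD'_eq, hc, if_false, reduceIte]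
        push_cast
        have hγ0 : γ 1 ≠ 0 := by linarith
        have key : γ 1 * (omegaD D - (⌊omegaD D⌋:ℝ)) = 1 := by
          rw [hfrac]; field_simp
        linear_combination -key
      · show ((1:ℤ) * ((⌊omegaD D⌋, 0) + ((0:ℤ), (1:ℤ))).2 - 0 * _) * _ = 1
        simp
  | succ m ih =>
    obtain ⟨ih1, ih2, ih3, ih4, ih5, ih6⟩ := ih
    have hc1 : ((m+1:ℕ):ℤ) - 1 = (m:ℤ) := by push_cast; ring
    have hc2 : ((m+1:ℕ):ℤ) = (m:ℤ) + 1 := by push_cast; ring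
    rw [hc1, hc2]
    have hrec0 := hconv.recur ((m:ℤ) - 1) (by omega)
    have hc3 : (m:ℤ) - 1 + 2 = (m:ℤ) + 1 := by ring
    have hc4 : (m:ℤ) - 1 + 1 = (m:ℤ) := by ring
    have hc5 : ((m:ℤ) + 1).toNat = m + 1 := by omega
    rw [hc3, hc4, hc5] at hrec0
    have hu1 : 1 ≤ (u (m+1) : ℤ) := by
      rw [hCF.floor_eq (m+1) (by omega)]
      rw [Int.le_floor]
      exact_mod_cast (hCF.one_lt (m+1) (by omega)).le
    have hu1R : (1:ℝ) ≤ (u (m+1) : ℝ) := by exact_mod_cast hu1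
    have he1 : emb1 D (a ((m:ℤ)+1)) = (u (m+1) : ℝ) * emb1 D (a (m:ℤ)) + emb1 D (a ((m:ℤ)-1)) := by
      rw [hrec0, emb1_add, emb1_zsmul]; push_cast; ring
    have he2 : emb2 D (a ((m:ℤ)+1)) = (u (m+1) : ℝ) * emb2 D (a (m:ℤ)) + emb2 D (a ((m:ℤ)-1)) := by
      rw [hrec0, emb2_add, emb2_zsmul]; push_cast; ring
    have hγ2 : 1 < γ (m+2) := hCF.one_lt (m+2) (by omega)
    have hstep : γ (m+1) = (u (m+1) : ℝ) + 1 / γ (m+2) := hCF.step (m+1) (by omega)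
    -- new H value
    have hH : (-1:ℝ)^(m+1+1) * emb2 D (a ((m:ℤ)+1)) =
        (1 / γ (m+2)) * ((-1:ℝ)^(m+1) * emb2 D (a (m:ℤ))) := by
      rw [he2]
      have hsign : (-1:ℝ)^(m+1+1) = (-1:ℝ)^m := by
        rw [pow_succ, pow_succ]; ring
      rw [hsign]
      have expand : (-1:ℝ)^m * ((u (m+1) : ℝ) * emb2 D (a (m:ℤ)) + emb2 D (a ((m:ℤ)-1)))
          = -((u (m+1):ℝ)) * ((-1:ℝ)^(m+1) * emb2 D (a (m:ℤ)))
            + (-1:ℝ)^m * emb2 D (a ((m:ℤ)-1)) := by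
        rw [pow_succ]; ring
      rw [expand, ih5, hstep]
      ring
    have hHpos : 0 < (-1:ℝ)^(m+1+1) * emb2 D (a ((m:ℤ)+1)) := by
      rw [hH]
      have : 0 < 1 / γ (m+2) := by positivity
      positivity
    refine ⟨by linarith, ?_, ih4, hHpos, ?_, ?_⟩
    · rw [he1]; nlinarith
    · rw [hH]
      have hγ0 : γ (m+2) ≠ 0 := by linarith
      field_simp
    · have d1 : (a ((m:ℤ))).1 * (a ((m:ℤ)+1)).2 - (a ((m:ℤ))).2 * (a ((m:ℤ)+1)).1
          = -((a ((m:ℤ)-1)).1 * (a (m:ℤ)).2 - (a ((m:ℤ)-1)).2 * (a (m:ℤ)).1) := by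
        rw [hrec0]
        simp only [Prod.fst_add, Prod.snd_add, Prod.smul_fst, Prod.smul_snd, smul_eq_mul]
        ring
      rw [d1]
      linear_combination ih6

lemma count_main (D : ℕ) (p q : OK)
    (hd : (p.1 * q.2 - p.2 * q.1) * (p.1 * q.2 - p.2 * q.1) = 1)
    (U : ℤ)
    (hgp : 0 < emb1 D p) (hgpq : emb1 D p < emb1 D q)
    (hfp : 0 < emb2 D p) (hfq : emb2 D q < 0)
    (hfU : 0 < emb2 D p + U * emb2 D q)
    (hfU1 : emb2 D p + (U + 1) * emb2 D q < 0)
    (r c : ℤ) (hr : 0 ≤ r) (hrc : r ≤ c) (hcr : c ≤ r + 1) (hcU : c ≤ U) :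
    pK D ((p + r • q) + (p + c • q)) = (min r (U - c)).toNat + 2 := by
  have hgq : 0 < emb1 D q := lt_trans hgp hgpq
  set σ : OK := (p + r • q) + (p + c • q) with hσ
  have hmcoσ : mco p q σ = 2 := by
    rw [hσ, mco_add, mco_comb p q hd, mco_comb p q hd]; norm_num
  have hncoσ : nco p q σ = r + c := by
    rw [hσ, nco_add, nco_comb p q hd, nco_comb p q hd]
  set K : ℕ := (min r (U - c)).toNat with hK
  have hKZ : (K : ℤ) = min r (U - c) := by
    rw [hK]; rw [Int.toNat_of_nonneg]; omega
  set F : ℕ → Multiset OK := fun k =>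
    Nat.casesOn k ({σ} : Multiset OK)
      (fun k' => ({p + (r - (k':ℤ)) • q, p + (c + (k':ℤ)) • q} : Multiset OK)) with hF
  have hsumF : ∀ k' : ℤ, (p + (r - k') • q) + (p + (c + k') • q) = σ := by
    intro k'
    rw [hσ]
    have : (r - k') • q + (c + k') • q = r • q + c • q := by
      rw [← add_smul, ← add_smul]; ring_nf
    calc (p + (r - k') • q) + (p + (c + k') • q)
        = p + p + ((r - k') • q + (c + k') • q) := by abel
      _ = p + p + (r • q + c • q) := by rw [this]
      _ = (p + r • q) + (p + c • q) := by abel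
  have hset : {s : Multiset OK | (∀ x ∈ s, TotPos D x) ∧ s.sum = σ} =
      ↑((Finset.range (K + 2)).image F) := by
    ext s
    simp only [Set.mem_setOf_eq, Finset.coe_image, Set.mem_image, Finset.mem_coe,
      Finset.mem_range]
    constructor
    · rintro ⟨hTP, hsum⟩
      -- every part has mco ≥ 1, total is 2
      have hmap1 : ∀ y ∈ s.map (mco p q), (1:ℤ) ≤ y := by
        intro y hy
        rw [Multiset.mem_map] at hy
        obtain ⟨x, hx, rfl⟩ := hy
        exact one_le_mco D p q hd hgp hgq hfp hfq (hTP x hx)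
      have hsum2 : (s.map (mco p q)).sum = 2 := by
        rw [← mco_sum, hsum, hmcoσ]
      have hcard : s.card ≤ 2 := by
        by_contra hcc
        push_neg at hcc
        have h1 : (Multiset.card (s.map (mco p q))) • (1:ℤ) ≤ (s.map (mco p q)).sum :=
          Multiset.card_nsmul_le_sum hmap1
        rw [Multiset.card_map, hsum2] at h1
        have : ((s.card : ℤ)) ≤ 2 := by simpa using h1
        omega
      rcases (by omega : s.card = 0 ∨ s.card = 1 ∨ s.card = 2) with h0 | h1 | h2
      · exfalso
        rw [Multiset.card_eq_zero] at h0
        subst h0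
        simp only [Multiset.sum_zero] at hsum
        rw [← hsum] at hmcoσ
        simp [mco] at hmcoσ
      · obtain ⟨x, rfl⟩ := Multiset.card_eq_one.mp h1
        refine ⟨0, by omega, ?_⟩
        simp only [Multiset.sum_singleton] at hsum
        show ({σ} : Multiset OK) = {x}
        rw [hsum]
      · obtain ⟨x, y, rfl⟩ := Multiset.card_eq_two.mp h2
        have hx : TotPos D x := hTP x (by simp)
        have hy : TotPos D y := hTP y (by simp)
        have hxy : x + y = σ := by
          simpa using hsum
        have hmxy : mco p q x + mco p q y = 2 := by
          rw [← mco_add, hxy, hmcoσ]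
        have hmx := one_le_mco D p q hd hgp hgq hfp hfq hx
        have hmy := one_le_mco D p q hd hgp hgq hfp hfq hy
        have hmx1 : mco p q x = 1 := by omega
        have hmy1 : mco p q y = 1 := by omega
        have hnxy : nco p q x + nco p q y = r + c := by
          rw [← nco_add, hxy, hncoσ]
        obtain ⟨hx0, hxU⟩ := nco_bounds D p q hd U hgp hgpq hfq hfU1 hx hmx1
        obtain ⟨hy0, hyU⟩ := nco_bounds D p q hd U hgp hgpq hfq hfU1 hy hmy1
        have hreprx : x = p + (nco p q x) • q := by
          conv_lhs => rw [repr_co p q hd x]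
          rw [hmx1, one_smul]
        have hrepry : y = p + (nco p q y) • q := by
          conv_lhs => rw [repr_co p q hd y]
          rw [hmy1, one_smul]
        have main : ∀ x' y' : OK, nco p q x' ≤ nco p q y' →
            x' = p + (nco p q x') • q → y' = p + (nco p q y') • q →
            0 ≤ nco p q x' → nco p q y' ≤ U →
            nco p q x' + nco p q y' = r + c →
            ∃ k < K + 2, F k = {x', y'} := by
          intro x' y' hle hrx hry h0' hU' hsum'
          have hx'r : nco p q x' ≤ r := by omega
          refine ⟨(r - nco p q x').toNat + 1, by omega, ?_⟩
          have ht : ((r - nco p q x').toNat : ℤ) = r - nco p q x' := by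
            rw [Int.toNat_of_nonneg]; omega
          show ({p + (r - ((r - nco p q x').toNat : ℤ)) • q,
            p + (c + ((r - nco p q x').toNat : ℤ)) • q} : Multiset OK) = {x', y'}
          rw [ht]
          have e1 : r - (r - nco p q x') = nco p q x' := by ring
          have e2 : c + (r - nco p q x') = nco p q y' := by omega
          rw [e1, e2, ← hrx, ← hry]
        rcases le_total (nco p q x) (nco p q y) with hle | hle
        · obtain ⟨k, hk, hFk⟩ := main x y hle hreprx hrepry hx0 hyU hnxy
          exact ⟨k, hk, hFk⟩
        · obtain ⟨k, hk, hFk⟩ := main y x hle hrepry hreprx hy0 hxU (by omega)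
          refine ⟨k, hk, ?_⟩
          rw [hFk]
          exact Multiset.pair_comm y x
    · rintro ⟨k, hk, rfl⟩
      cases k with
      | zero =>
        constructor
        · intro x hx
          have hx' : x = σ := by
            have hx2 : x ∈ ({σ} : Multiset OK) := hx
            simpa using hx2
          subst hx'
          exact totPos_add D (totPos_comb D p q U hgp hgq hfq hfU r hr (by omega))
            (totPos_comb D p q U hgp hgq hfq hfU c (by omega) hcU)
        · show ({σ} : Multiset OK).sum = σ
          simp
      | succ k' =>
        have hk' : (k' : ℤ) ≤ min r (U - c) := by
          have : k' ≤ K := by omega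
          have : (k' : ℤ) ≤ (K : ℤ) := by exact_mod_cast this
          omega
        constructor
        · intro x hx
          have hx2 : x ∈ ({p + (r - (k':ℤ)) • q, p + (c + (k':ℤ)) • q} : Multiset OK) := hx
          simp only [Multiset.insert_eq_cons, Multiset.mem_cons,
            Multiset.mem_singleton] at hx2
          rcases hx2 with rfl | rfl
          · exact totPos_comb D p q U hgp hgq hfq hfU _ (by omega) (by omega)
          · exact totPos_comb D p q U hgp hgq hfq hfU _ (by omega) (by omega)
        · show (({p + (r - (k':ℤ)) • q, p + (c + (k':ℤ)) • q} : Multiset OK)).sum = σ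
          rw [Multiset.sum_pair]
          exact hsumF (k' : ℤ)
  rw [pK, hset, Set.ncard_coe_finset]
  rw [Finset.card_image_of_injOn, Finset.card_range]
  -- injectivity
  intro k1 hk1 k2 hk2 heq
  simp only [Finset.coe_range, Set.mem_Iio] at hk1 hk2
  match k1, k2 with
  | 0, 0 => rfl
  | 0, (k2' + 1) =>
    exfalso
    have := congrArg Multiset.card heq
    simp [hF] at this
  | (k1' + 1), 0 =>
    exfalso
    have := congrArg Multiset.card heq
    simp [hF] at this
  | (k1' + 1), (k2' + 1) =>
    have heq' : ({p + (r - (k1':ℤ)) • q, p + (c + (k1':ℤ)) • q} : Multiset OK) =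
        ({p + (r - (k2':ℤ)) • q, p + (c + (k2':ℤ)) • q} : Multiset OK) := heq
    have hmem : (p + (c + (k1':ℤ)) • q) ∈
        ({p + (r - (k2':ℤ)) • q, p + (c + (k2':ℤ)) • q} : Multiset OK) := by
      rw [← heq']
      simp
    simp only [Multiset.insert_eq_cons, Multiset.mem_cons, Multiset.mem_singleton] at hmem
    rcases hmem with hmem | hmem
    · -- c + k1' = r - k2' forces k1' = k2' = 0 and c = r
      have h1 : c + (k1':ℤ) = r - (k2':ℤ) := comb_inj D p q hgq hmem
      have hk10 : (k1':ℤ) = 0 ∧ (k2':ℤ) = 0 := by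
        constructor <;> [skip; skip] <;> omega
      have e1 : k1' = 0 := by exact_mod_cast hk10.1
      have e2 : k2' = 0 := by exact_mod_cast hk10.2
      rw [e1, e2]
    · have h1 : c + (k1':ℤ) = c + (k2':ℤ) := comb_inj D p q hgq hmem
      have : (k1':ℤ) = (k2':ℤ) := by omega
      have : k1' = k2' := by exact_mod_cast this
      rw [this]


/-- `p_K(2β_j) = min{r+2, u_{i+2}-r+2}` and
`p_K(β_j+β_{j+1}) = min{r+2, u_{i+2}-r+1}` for `β_j = α_{i,r}`. -/
theorem stmt4 (D : ℕ) (hD : 2 ≤ D) (hsq : Squarefree D)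
    (u : ℕ → ℕ) (γ : ℕ → ℝ) (hCF : CFData D u γ)
    (a : ℤ → OK) (hconv : ConvData D u a)
    (β : ℤ → OK) (v : ℤ → ℤ) (hβ : BetaSeq D β v)
    (i : ℤ) (hi : -1 ≤ i) (hodd : Odd i)
    (r : ℤ) (hr0 : 0 ≤ r) (hr1 : r ≤ (u (i + 2).toNat : ℤ) - 1)
    (j : ℤ) (hj : β j = semiconv a i r) :
    pK D (β j + β j) = (min (r + 2) ((u (i + 2).toNat : ℤ) - r + 2)).toNat ∧
    pK D (β j + β (j + 1)) = (min (r + 2) ((u (i + 2).toNat : ℤ) - r + 1)).toNat := by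
  obtain ⟨n, hn⟩ : ∃ n : ℕ, (n : ℤ) = i + 1 :=
    ⟨(i + 1).toNat, Int.toNat_of_nonneg (by omega)⟩
  have hneven : Even n := by
    have : Even ((n : ℤ)) := by rw [hn]; exact Odd.add_one hodd
    exact_mod_cast this
  have htn : (i + 2).toNat = n + 1 := by omega
  rw [htn]
  set U : ℤ := (u (n + 1) : ℤ) with hU
  set p : OK := a i with hp
  set q : OK := a (i + 1) with hq
  have hi1 : ((n:ℤ) - 1) = i := by omega
  have hi2 : ((n:ℤ)) = i + 1 := hn
  -- facts from the chain lemma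
  have C := chain D hD u γ hCF a hconv n
  rw [hi1, hi2] at C
  obtain ⟨hgp, hgpq, hfp', hfq', hrel', hd⟩ := C
  have hsgn : ((-1:ℝ))^n = 1 := Even.neg_one_pow hneven
  have hsgn1 : ((-1:ℝ))^(n+1) = -1 := Odd.neg_one_pow (Even.add_one hneven)
  rw [hsgn] at hfp' hrel'
  rw [hsgn1] at hfq' hrel'
  have hfp : 0 < emb2 D p := by linarith [hfp']
  have hfq : emb2 D q < 0 := by
    have := hfq'
    nlinarith
  have hrel : emb2 D p = γ (n+1) * (-(emb2 D q)) := by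
    have := hrel'
    linarith [hrel']
  -- chain at n+1 for the tail positivity
  have C2 := chain D hD u γ hCF a hconv (n+1)
  have hc1 : ((n+1:ℕ):ℤ) - 1 = i + 1 := by push_cast; omega
  have hc2 : ((n+1:ℕ):ℤ) = i + 2 := by push_cast; omega
  rw [hc1, hc2] at C2
  have hfU' : 0 < ((-1:ℝ))^(n+1+1) * emb2 D (a (i + 2)) := C2.2.2.2.1
  have hsgn2 : ((-1:ℝ))^(n+1+1) = 1 := by
    rw [pow_succ, pow_succ, hsgn]; ring
  rw [hsgn2, one_mul] at hfU'
  -- the recurrence at i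
  have hrec := hconv.recur i hi
  rw [htn] at hrec
  have hemb2rec : emb2 D (a (i + 2)) = (U:ℝ) * emb2 D q + emb2 D p := by
    rw [hrec, emb2_add, emb2_zsmul]
  have hfU : 0 < emb2 D p + U * emb2 D q := by
    rw [hemb2rec] at hfU'
    linarith
  -- upper bound: γ (n+1) < U + 1
  have hγ2 : 1 < γ (n+2) := hCF.one_lt (n+2) (by omega)
  have hstep : γ (n+1) = (u (n+1) : ℝ) + 1 / γ (n+2) := hCF.step (n+1) (by omega)
  have hγlt : γ (n+1) < (U:ℝ) + 1 := by
    have h1 : 1 / γ (n+2) < 1 := by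
      rw [div_lt_one (by linarith)]
      linarith
    rw [hU, hstep]
    push_cast
    linarith
  have hfU1 : emb2 D p + (U + 1) * emb2 D q < 0 := by
    have hpos : 0 < -(emb2 D q) := by linarith
    have := mul_pos (sub_pos.2 hγlt) hpos
    push_cast
    nlinarith [hrel]
  have hgq : 0 < emb1 D q := lt_trans hgp hgpq
  have hUr : r ≤ U - 1 := by rw [htn] at hr1; exact hr1
  have hbj : β j = p + r • q := hj
  rw [← hp] at hgp hgpq hd
  rw [← hq] at hgpq hd
  clear_value U p q
  -- identify β (j+1)
  have hbj1 : β (j + 1) = p + (r + 1) • q := by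
    have hTPx1 : TotPos D (p + (r+1) • q) :=
      totPos_comb D p q U hgp hgq hfq hfU (r+1) (by omega) (by omega)
    have hIndx1 : Indec D (p + (r+1) • q) := by
      refine ⟨hTPx1, ?_⟩
      rintro ⟨b, c', hb, hc', hbc⟩
      have h1 : mco p q (p + (r+1) • q) = 1 := mco_comb p q hd (r+1)
      have h2 : mco p q (p + (r+1) • q) = mco p q b + mco p q c' := by
        rw [hbc, mco_add]
      have h3 := one_le_mco D p q hd hgp hgq hfp hfq hb
      have h4 := one_le_mco D p q hd hgp hgq hfp hfq hc'
      omega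
    obtain ⟨l, hl⟩ := hβ.surj _ hIndx1
    have hjl : j < l := by
      have h1 : emb1 D (β j) < emb1 D (β l) := by
        rw [hbj, hl, emb1_add, emb1_add, emb1_zsmul, emb1_zsmul]
        push_cast
        nlinarith
      exact hβ.mono.lt_iff_lt.mp h1
    rcases lt_or_eq_of_le (by omega : j + 1 ≤ l) with hlt | heq
    · exfalso
      have anti : ∀ {k k' : ℤ}, k < k' → emb2 D (β k') < emb2 D (β k) := by
        intro k k' hkk
        have h1 : emb1 D (β (-k')) < emb1 D (β (-k)) :=
          hβ.mono (show -k' < -k by omega)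
        rw [hβ.conj_eq k', hβ.conj_eq k, emb1_conjOK, emb1_conjOK] at h1
        exact h1
      have hTPι : TotPos D (β (j+1)) := (hβ.indec (j+1)).1
      have hM1 := one_le_mco D p q hd hgp hgq hfp hfq hTPι
      have e1 := emb1_repr D p q hd (β (j+1))
      have e2 := emb2_repr D p q hd (β (j+1))
      obtain ⟨M, hM⟩ : ∃ M, mco p q (β (j+1)) = M := ⟨_, rfl⟩
      obtain ⟨N, hN⟩ : ∃ N, nco p q (β (j+1)) = N := ⟨_, rfl⟩
      rw [hM] at e1 e2 hM1
      rw [hN] at e1 e2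
      have A1 : emb1 D (β j) < emb1 D (β (j+1)) := hβ.mono (by omega : j < j + 1)
      have A2 : emb1 D (β (j+1)) < emb1 D (β l) := hβ.mono hlt
      have B1 : emb2 D (β l) < emb2 D (β (j+1)) := anti hlt
      have B2 : emb2 D (β (j+1)) < emb2 D (β j) := anti (by omega : j < j + 1)
      rw [hbj, emb1_add, emb1_zsmul] at A1
      rw [hl, emb1_add, emb1_zsmul] at A2
      rw [hl, emb2_add, emb2_zsmul] at B1
      rw [hbj, emb2_add, emb2_zsmul] at B2
      rw [e1] at A1 A2
      rw [e2] at B1 B2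
      push_cast at A1 A2 B1 B2
      have hMR : (1:ℝ) ≤ (M:ℝ) := by exact_mod_cast hM1
      have hNge : r + 1 ≤ N := by
        by_contra hcon
        push_neg at hcon
        have hNR : (N:ℝ) ≤ (r:ℝ) := by exact_mod_cast (by omega : N ≤ r)
        linarith [mul_nonneg (by linarith : (0:ℝ) ≤ (M:ℝ) - 1) hfp.le,
          mul_nonneg (by linarith : (0:ℝ) ≤ (r:ℝ) - (N:ℝ)) (by linarith : (0:ℝ) ≤ -(emb2 D q))]
      have hNR : (r:ℝ) + 1 ≤ (N:ℝ) := by exact_mod_cast hNge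
      linarith [mul_nonneg (by linarith : (0:ℝ) ≤ (M:ℝ) - 1) hgp.le,
        mul_nonneg (by linarith : (0:ℝ) ≤ (N:ℝ) - (r:ℝ) - 1) hgq.le]
    · rw [← heq] at hl
      exact hl
  constructor
  · rw [hbj]
    have := count_main D p q hd U hgp hgpq hfp hfq hfU hfU1 r r hr0 le_rfl
      (by omega) (by omega)
    rw [this]
    rcases le_total r (U - r) with h | h
    · rw [min_eq_left (by omega : r + 2 ≤ U - r + 2)]
      omega
    · rw [min_eq_right (by omega : U - r + 2 ≤ r + 2)]
      omega
  · rw [hbj, hbj1]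
    have := count_main D p q hd U hgp hgpq hfp hfq hfU hfU1 r (r+1) hr0 (by omega)
      (by omega) (by omega)
    rw [this]
    rcases le_total r (U - (r+1)) with h | h
    · rw [min_eq_left (by omega : r + 2 ≤ U - r + 1)]
      omega
    · rw [min_eq_right (by omega : U - r + 1 ≤ r + 2)]
      omega
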